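/- Let H be a hyperbolic group with finite generating set A and word metric d_A, and let φ : H → H be an endomorphism. Then the following are equivalent: (i) the BRP holds for φ, i.e., for every p ≥ 0 there exists q ≥ 0 such that for all u, v ∈ H, (u|v) ≤ p implies (φ(u)|φ(v)) ≤ q; (ii) there exists N ≥ 0 such that for all x, y ∈ H, every discrete geodesic α from x to y and every discrete geodesic ξ from φ(x) to φ(y), the Hausdorff distance between the set φ(image of α) and the image of ξ is at most N; (iii) there exists N ≥ 0 such that for all x, y ∈ H, every discrete geodesic α from x to y and every discrete geodesic ξ from φ(x) to φ(y), the set φ(image of α) is contained in the closed N-neighbourhood of the image of ξ. -/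

import Mathlib

/-!
Hyperbolicity puts every point `w` within `(x|y)_w + 2δ + 1` of any geodesic `[x, y]`, while the
points of `[x, y]` are those with `(x|y)_w = 0`. Hence bounded reduction at `p = 0` puts the
`φ`-image of a geodesic near every geodesic joining the image endpoints. Conversely, the
neighbourhood condition and the Lipschitz bound for `φ` bound `(φ u|φ v)` by the distance from `1`
to the `φ`-image of a point of `[u, v]` that is close to `1`. Finally, `φ ∘ α` is a path with
steps of bounded length joining the endpoints of `ξ`, so the feet of its points on `ξ` move in
bounded steps from near `0` to near `m`, and every point of `ξ` is close to one of them.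
-/

namespace Paper

variable {H : Type*} [Group H]

/-- `g` can be written as a product of `n` elements of `A ∪ A⁻¹`. -/
def WordWitness (A : Set H) (g : H) (n : ℕ) : Prop :=
  ∃ l : List H, l.length = n ∧ (∀ x ∈ l, x ∈ A ∨ x⁻¹ ∈ A) ∧ l.prod = g

/-- The word metric on `H` with respect to the generating set `A`. -/
noncomputable def wd (A : Set H) (g h : H) : ℕ :=
  sInf {n | WordWitness A (g⁻¹ * h) n}

/-- The Gromov product `(u|v)_w` with respect to the word metric for `A`. -/
noncomputable def gp (A : Set H) (w u v : H) : ℝ :=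
  ((wd A w u : ℝ) + (wd A w v : ℝ) - (wd A u v : ℝ)) / 2

/-- A discrete geodesic `γ : {0,…,n} → H` from `x` to `y` for the word metric of `A`. -/
def IsDiscreteGeodesic (A : Set H) (n : ℕ) (γ : ℕ → H) (x y : H) : Prop :=
  γ 0 = x ∧ γ n = y ∧
    ∀ i, i ≤ n → ∀ j, j ≤ n → (wd A (γ i) (γ j) : ℤ) = |(i : ℤ) - (j : ℤ)|

/-- `H` is hyperbolic with respect to `A`: some `δ ≥ 0` satisfies the Rips thin-triangles
condition for discrete geodesics (all three sides are covered since `x, y, z` and the three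
geodesics are universally quantified, and hence may be cyclically permuted). -/
def IsHyperbolic (A : Set H) : Prop :=
  ∃ δ : ℝ, 0 ≤ δ ∧ ∀ x y z : H, ∀ n₁ n₂ n₃ : ℕ, ∀ α β γ : ℕ → H,
    IsDiscreteGeodesic A n₁ α x y → IsDiscreteGeodesic A n₂ β y z →
    IsDiscreteGeodesic A n₃ γ z x → ∀ i, i ≤ n₁ →
      ∃ j, (j ≤ n₂ ∧ (wd A (α i) (β j) : ℝ) ≤ δ) ∨
           (j ≤ n₃ ∧ (wd A (α i) (γ j) : ℝ) ≤ δ)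

/-- The bounded reduction property for `φ`, in its Gromov-product formulation:
for every `p ≥ 0` there is `q ≥ 0` such that `(u|v) ≤ p` implies `(φ(u)|φ(v)) ≤ q`. -/
def BRP (A : Set H) (φ : H →* H) : Prop :=
  ∀ p : ℝ, 0 ≤ p → ∃ q : ℝ, 0 ≤ q ∧
    ∀ u v : H, gp A 1 u v ≤ p → gp A 1 (φ u) (φ v) ≤ q

section WordMetric

variable {A : Set H}

theorem WordWitness.mul {g h : H} {m n : ℕ} (hg : WordWitness A g m) (hh : WordWitness A h n) :
    WordWitness A (g * h) (m + n) := by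
  obtain ⟨l, rfl, hl, rfl⟩ := hg
  obtain ⟨l', rfl, hl', rfl⟩ := hh
  refine ⟨l ++ l', List.length_append, fun x hx => ?_, List.prod_append⟩
  rcases List.mem_append.1 hx with hx | hx
  exacts [hl x hx, hl' x hx]

theorem WordWitness.inv {g : H} {n : ℕ} (hg : WordWitness A g n) : WordWitness A g⁻¹ n := by
  obtain ⟨l, rfl, hl, rfl⟩ := hg
  refine ⟨(l.map (·⁻¹)).reverse, by simp, fun x hx => ?_, (List.prod_inv_reverse l).symm⟩
  obtain ⟨a, ha, rfl⟩ := List.mem_map.1 (List.mem_reverse.1 hx)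
  simpa [or_comm] using hl a ha

theorem exists_wordWitness (hgen : Subgroup.closure A = ⊤) (g : H) : ∃ n, WordWitness A g n := by
  induction hgen ▸ Subgroup.mem_top g using Subgroup.closure_induction with
  | mem a ha => exact ⟨1, [a], rfl, by simp [ha], List.prod_singleton⟩
  | one => exact ⟨0, [], rfl, by simp, rfl⟩
  | mul a b _ _ iha ihb =>
    obtain ⟨m, hm⟩ := iha
    obtain ⟨n, hn⟩ := ihb
    exact ⟨m + n, hm.mul hn⟩
  | inv a _ iha =>
    obtain ⟨n, hn⟩ := iha
    exact ⟨n, hn.inv⟩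

theorem wd_le_of_wordWitness {g h : H} {n : ℕ} (hw : WordWitness A (g⁻¹ * h) n) : wd A g h ≤ n :=
  Nat.sInf_le hw

theorem wordWitness_wd (hgen : Subgroup.closure A = ⊤) (g h : H) :
    WordWitness A (g⁻¹ * h) (wd A g h) :=
  Nat.sInf_mem (exists_wordWitness hgen _)

theorem wd_eq_of_inv_mul_eq {g h g' h' : H} (e : g⁻¹ * h = g'⁻¹ * h') : wd A g h = wd A g' h' := by
  rw [wd, wd, e]

theorem wd_self (g : H) : wd A g g = 0 :=
  Nat.le_zero.1 (wd_le_of_wordWitness ⟨[], rfl, by simp, by simp⟩)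

theorem wd_comm (g h : H) : wd A g h = wd A h g := by
  have key : ∀ g h : H, {n | WordWitness A (g⁻¹ * h) n} ⊆ {n | WordWitness A (h⁻¹ * g) n} :=
    fun g h n hn => by simpa using WordWitness.inv hn
  exact congrArg sInf ((key g h).antisymm (key h g))

theorem wd_mul_left (k g h : H) : wd A (k * g) (k * h) = wd A g h :=
  wd_eq_of_inv_mul_eq (by group)

theorem wd_one_inv (g : H) : wd A 1 g⁻¹ = wd A 1 g := by
  rw [wd_comm 1 g]
  exact wd_eq_of_inv_mul_eq (by group)

theorem wd_triangle (hgen : Subgroup.closure A = ⊤) (g h k : H) :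
    wd A g k ≤ wd A g h + wd A h k :=
  wd_le_of_wordWitness <| by
    simpa [mul_assoc] using (wordWitness_wd hgen g h).mul (wordWitness_wd hgen h k)

theorem wd_triangle_real (hgen : Subgroup.closure A = ⊤) (g h k : H) :
    (wd A g k : ℝ) ≤ wd A g h + wd A h k := by
  exact_mod_cast wd_triangle hgen g h k

theorem wd_mul_le_one {g a : H} (ha : a ∈ A ∨ a⁻¹ ∈ A) : wd A g (g * a) ≤ 1 :=
  wd_le_of_wordWitness ⟨[a], rfl, by simpa using ha, by simp⟩

end WordMetric

section Geodesic

variable {A : Set H} {n : ℕ} {γ : ℕ → H} {x y : H}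

theorem IsDiscreteGeodesic.wd_eq_abs (hγ : IsDiscreteGeodesic A n γ x y) {i j : ℕ} (hi : i ≤ n)
    (hj : j ≤ n) : (wd A (γ i) (γ j) : ℝ) = |(i : ℝ) - j| := by
  exact_mod_cast hγ.2.2 i hi j hj

theorem IsDiscreteGeodesic.wd_eq_sub (hγ : IsDiscreteGeodesic A n γ x y) {i j : ℕ} (hij : i ≤ j)
    (hj : j ≤ n) : (wd A (γ i) (γ j) : ℝ) = j - i := by
  rw [hγ.wd_eq_abs (hij.trans hj) hj, abs_sub_comm, abs_of_nonneg (by simpa using hij)]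

theorem IsDiscreteGeodesic.wd_succ (hγ : IsDiscreteGeodesic A n γ x y) {i : ℕ} (hi : i < n) :
    wd A (γ i) (γ (i + 1)) = 1 := by
  have := hγ.2.2 i hi.le (i + 1) hi
  rw [abs_of_nonpos (by omega)] at this
  omega

theorem IsDiscreteGeodesic.wd_start (hγ : IsDiscreteGeodesic A n γ x y) {i : ℕ} (hi : i ≤ n) :
    (wd A x (γ i) : ℝ) = i := by
  simpa [hγ.1] using hγ.wd_eq_sub (Nat.zero_le i) hi

theorem IsDiscreteGeodesic.wd_end (hγ : IsDiscreteGeodesic A n γ x y) {i : ℕ} (hi : i ≤ n) :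
    (wd A (γ i) y : ℝ) = n - i := by
  simpa [hγ.2.1] using hγ.wd_eq_sub hi le_rfl

theorem IsDiscreteGeodesic.wd_endpoints (hγ : IsDiscreteGeodesic A n γ x y) :
    (wd A x y : ℝ) = n := by
  simpa [hγ.2.1] using hγ.wd_start le_rfl

theorem IsDiscreteGeodesic.wd_add_wd (hγ : IsDiscreteGeodesic A n γ x y) {i : ℕ} (hi : i ≤ n) :
    (wd A x (γ i) : ℝ) + wd A (γ i) y = wd A x y := by
  rw [hγ.wd_start hi, hγ.wd_end hi, hγ.wd_endpoints]
  ring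

theorem isDiscreteGeodesic_of_wd_succ_le (hgen : Subgroup.closure A = ⊤)
    (hstep : ∀ i < n, wd A (γ i) (γ (i + 1)) ≤ 1) (hlen : wd A (γ 0) (γ n) = n) :
    IsDiscreteGeodesic A n γ (γ 0) (γ n) := by
  have hle : ∀ i j, i ≤ j → j ≤ n → wd A (γ i) (γ j) ≤ j - i := by
    intro i j hij hjn
    induction j, hij using Nat.le_induction with
    | base => simp [wd_self]
    | succ j hij ih =>
      have := wd_triangle hgen (γ i) (γ j) (γ (j + 1))
      have := hstep j hjn
      have := ih (by omega)
      omega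
  have heq : ∀ i j, i ≤ j → j ≤ n → wd A (γ i) (γ j) = j - i := by
    intro i j hij hjn
    have := wd_triangle hgen (γ 0) (γ i) (γ n)
    have := wd_triangle hgen (γ i) (γ j) (γ n)
    have := hle 0 i (Nat.zero_le i) (hij.trans hjn)
    have := hle i j hij hjn
    have := hle j n hjn le_rfl
    omega
  refine ⟨rfl, rfl, fun i hi j hj => ?_⟩
  rcases le_total i j with hij | hji
  · rw [heq i j hij hj, abs_of_nonpos (by omega)]
    omega
  · rw [wd_comm, heq j i hji hi, abs_of_nonneg (by omega)]
    omega

theorem exists_isDiscreteGeodesic (hgen : Subgroup.closure A = ⊤) (x y : H) :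
    ∃ γ : ℕ → H, IsDiscreteGeodesic A (wd A x y) γ x y := by
  obtain ⟨l, hlen, hl, hprod⟩ := wordWitness_wd hgen x y
  have hend : x * (l.take (wd A x y)).prod = y := by
    rw [← hlen, List.take_length, hprod, mul_inv_cancel_left]
  have key := isDiscreteGeodesic_of_wd_succ_le (γ := fun i => x * (l.take i).prod) (n := wd A x y)
    hgen (fun i hi => by
      rw [List.prod_take_succ l i (hlen ▸ hi), ← mul_assoc]
      exact wd_mul_le_one (hl _ (List.getElem_mem _)))
    (by simp only [List.take_zero, List.prod_nil, mul_one, hend])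
  simp only [List.take_zero, List.prod_nil, mul_one, hend] at key
  exact ⟨_, key⟩

end Geodesic

section GromovProduct

variable {A : Set H}

theorem gp_inv_mul (w u v : H) : gp A 1 (w⁻¹ * u) (w⁻¹ * v) = gp A w u v := by
  rw [gp, gp, ← wd_mul_left w⁻¹ w u, ← wd_mul_left w⁻¹ w v, ← wd_mul_left w⁻¹ u v,
    inv_mul_cancel]

theorem gp_le_wd_of_wd_add_wd_eq (hgen : Subgroup.closure A = ⊤) {x y p : H}
    (hp : (wd A x p : ℝ) + wd A p y = wd A x y) (w : H) : gp A w x y ≤ wd A w p := by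
  have := wd_triangle_real hgen w p x
  have := wd_triangle_real hgen w p y
  have : (wd A p x : ℝ) = wd A x p := by rw [wd_comm]
  rw [gp]
  linarith

theorem IsDiscreteGeodesic.gp_eq_zero {n : ℕ} {γ : ℕ → H} {x y : H}
    (hγ : IsDiscreteGeodesic A n γ x y) {i : ℕ} (hi : i ≤ n) : gp A (γ i) x y = 0 := by
  rw [gp, wd_comm, ← hγ.wd_add_wd hi]
  ring

end GromovProduct

section Lipschitz

variable {K : Type*} [Group K]

theorem wd_one_list_prod_le {B : Set K} (hgen : Subgroup.closure B = ⊤) (l : List K) :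
    wd B 1 l.prod ≤ (l.map (wd B 1)).sum := by
  induction l with
  | nil => simp [wd_self]
  | cons a l ih =>
    calc wd B 1 (a * l.prod) ≤ wd B 1 a + wd B a (a * l.prod) := wd_triangle hgen _ _ _
      _ = wd B 1 a + wd B 1 l.prod := by rw [← wd_mul_left a 1 l.prod, mul_one]
      _ ≤ ((a :: l).map (wd B 1)).sum := by simpa using ih

theorem exists_wd_map_le_mul {A : Set H} {B : Set K} (hA : A.Finite)
    (hAgen : Subgroup.closure A = ⊤) (hBgen : Subgroup.closure B = ⊤) (φ : H →* K) :
    ∃ C : ℕ, ∀ g h : H, wd B (φ g) (φ h) ≤ C * wd A g h := by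
  classical
  let C := hA.toFinset.sup fun a => wd B 1 (φ a)
  have hbound : ∀ a, a ∈ A ∨ a⁻¹ ∈ A → wd B 1 (φ a) ≤ C := by
    rintro a (ha | ha)
    · exact Finset.le_sup (f := fun a => wd B 1 (φ a)) (hA.mem_toFinset.2 ha)
    · simpa [wd_one_inv] using Finset.le_sup (f := fun a => wd B 1 (φ a)) (hA.mem_toFinset.2 ha)
  refine ⟨C, fun g h => ?_⟩
  obtain ⟨l, hlen, hl, hprod⟩ := wordWitness_wd hAgen g h
  calc wd B (φ g) (φ h) = wd B 1 (l.map φ).prod := by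
        rw [← map_list_prod, hprod, map_mul, map_inv]
        exact wd_eq_of_inv_mul_eq (by group)
    _ ≤ ((l.map φ).map (wd B 1)).sum := wd_one_list_prod_le hBgen _
    _ ≤ ((l.map φ).map (wd B 1)).length • C := by
        refine List.sum_le_card_nsmul _ _ fun d hd => ?_
        simp only [List.map_map, List.mem_map, Function.comp_apply] at hd
        obtain ⟨a, ha, rfl⟩ := hd
        exact hbound a (hl a ha)
    _ = C * wd A g h := by simp [hlen, mul_comm]

end Lipschitz

def RipsCondition (A : Set H) (δ : ℝ) : Prop :=
  ∀ x y z : H, ∀ n₁ n₂ n₃ : ℕ, ∀ α β γ : ℕ → H,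
    IsDiscreteGeodesic A n₁ α x y → IsDiscreteGeodesic A n₂ β y z →
    IsDiscreteGeodesic A n₃ γ z x → ∀ i, i ≤ n₁ →
      ∃ j, (j ≤ n₂ ∧ (wd A (α i) (β j) : ℝ) ≤ δ) ∨
           (j ≤ n₃ ∧ (wd A (α i) (γ j) : ℝ) ≤ δ)

section ThinTriangles

variable {A : Set H}

theorem exists_adjacent_of_forall_or {P Q : ℕ → Prop} {m : ℕ} (hP : P 0) (hQ : Q m)
    (hPQ : ∀ i ≤ m, P i ∨ Q i) :
    ∃ i ≤ m, ∃ i' ≤ m, i ≤ i' ∧ i' ≤ i + 1 ∧ P i ∧ Q i' := by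
  by_contra! hno
  have hall : ∀ i ≤ m, P i := by
    intro i hi
    induction i with
    | zero => exact hP
    | succ i ih =>
      have hPi := ih (by omega)
      exact (hPQ (i + 1) hi).resolve_right (hno i (by omega) (i + 1) hi (by omega) le_rfl hPi)
  exact hno m le_rfl m le_rfl le_rfl (by omega) (hall m le_rfl) hQ

theorem wd_add_wd_le_of_wd_le (hgen : Subgroup.closure A = ⊤) {w x c p : H} {δ : ℝ}
    (hc : (wd A w c : ℝ) + wd A c x = wd A w x) (hp : (wd A p c : ℝ) ≤ δ) :
    (wd A w p : ℝ) + wd A p x ≤ wd A w x + 2 * δ := by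
  have := wd_triangle_real hgen w c p
  have := wd_triangle_real hgen p c x
  have : (wd A c p : ℝ) = wd A p c := by rw [wd_comm]
  linarith

/-- In a `δ`-thin triangle with vertices `x, y, w`, the point of `[x, y]` where the side
switches from being `δ`-close to `[w, x]` to being `δ`-close to `[y, w]` is an approximate
centre of the triangle. -/
theorem exists_wd_le_gp_add (hgen : Subgroup.closure A = ⊤) {δ : ℝ} (hδ : 0 ≤ δ)
    (hR : RipsCondition A δ) {x y : H} {m : ℕ} {ξ : ℕ → H} (hξ : IsDiscreteGeodesic A m ξ x y)
    (w : H) : ∃ i ≤ m, (wd A w (ξ i) : ℝ) ≤ gp A w x y + 2 * δ + 1 := by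
  obtain ⟨β, hβ⟩ := exists_isDiscreteGeodesic hgen y w
  obtain ⟨γ, hγ⟩ := exists_isDiscreteGeodesic hgen w x
  obtain ⟨i, hi, i', hi', hii', hi'i, ⟨j, hj, hγj⟩, ⟨k, hk, hβk⟩⟩ :=
    exists_adjacent_of_forall_or
      (P := fun i => ∃ j ≤ wd A w x, (wd A (ξ i) (γ j) : ℝ) ≤ δ)
      (Q := fun i => ∃ k ≤ wd A y w, (wd A (ξ i) (β k) : ℝ) ≤ δ)
      ⟨wd A w x, le_rfl, by simpa [hξ.1, hγ.2.1, wd_self] using hδ⟩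
      ⟨0, Nat.zero_le _, by simpa [hξ.2.1, hβ.1, wd_self] using hδ⟩
      (fun i hi => (exists_or.1 (hR x y w _ _ _ ξ β γ hξ hβ hγ i hi)).symm)
  have hwx := wd_add_wd_le_of_wd_le hgen (hγ.wd_add_wd hj) hγj
  have hyw := wd_add_wd_le_of_wd_le hgen (hβ.wd_add_wd hk) hβk
  have hi'_le : (i' : ℝ) ≤ i + 1 := by exact_mod_cast hi'i
  have hξi : (wd A (ξ i) x : ℝ) = i := by rw [wd_comm]; exact hξ.wd_start hi
  have hξi' : (wd A y (ξ i') : ℝ) = m - i' := by rw [wd_comm]; exact hξ.wd_end hi'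
  have hξii' : (wd A (ξ i) (ξ i') : ℝ) = i' - i := hξ.wd_eq_sub hii' hi'
  have htri := wd_triangle_real hgen (ξ i) (ξ i') w
  refine ⟨i, hi, ?_⟩
  rw [wd_comm w (ξ i)] at hwx
  rw [gp, wd_comm w (ξ i), wd_comm w y, hξ.wd_endpoints]
  linarith

end ThinTriangles

section CoarsePaths

variable {A : Set H}

theorem exists_le_le_add_of_succ_le {g : ℕ → ℝ} {D t : ℝ} (hD : 0 ≤ D) :
    ∀ {n : ℕ}, (∀ i < n, g (i + 1) ≤ g i + D) → g 0 ≤ t → t ≤ g n →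
      ∃ i ≤ n, g i ≤ t ∧ t ≤ g i + D
  | 0, _, h0, hn => ⟨0, le_rfl, h0, by linarith⟩
  | n + 1, hstep, h0, hn => by
    by_cases hlt : g n < t
    · exact ⟨n, by omega, hlt.le, hn.trans (hstep n (by omega))⟩
    · obtain ⟨i, hi, hgi⟩ :=
        exists_le_le_add_of_succ_le hD (fun i hi => hstep i (by omega)) h0 (not_lt.1 hlt)
      exact ⟨i, by omega, hgi⟩

theorem exists_wd_le_of_forall_exists_wd_le (hgen : Subgroup.closure A = ⊤) {f ξ : ℕ → H}
    {n m : ℕ} {C N : ℝ} (hC : 0 ≤ C) (hξ : IsDiscreteGeodesic A m ξ (f 0) (f n))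
    (hstep : ∀ i < n, (wd A (f i) (f (i + 1)) : ℝ) ≤ C)
    (hnear : ∀ i ≤ n, ∃ j ≤ m, (wd A (f i) (ξ j) : ℝ) ≤ N) :
    ∀ k ≤ m, ∃ i ≤ n, (wd A (ξ k) (f i) : ℝ) ≤ 3 * N + C := by
  have hfoot : ∀ i, ∃ j, i ≤ n → j ≤ m ∧ (wd A (f i) (ξ j) : ℝ) ≤ N := fun i => by
    by_cases hi : i ≤ n
    · exact (hnear i hi).imp fun j hj _ => hj
    · exact ⟨0, fun h => absurd h hi⟩
  choose J hJ using hfoot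
  have hN : 0 ≤ N := (Nat.cast_nonneg _).trans (hJ 0 (Nat.zero_le n)).2
  have hdist : ∀ i ≤ n, ∀ k ≤ m, (wd A (ξ k) (f i) : ℝ) ≤ |(k : ℝ) - J i| + N := by
    intro i hi k hk
    have htri := wd_triangle_real hgen (ξ k) (ξ (J i)) (f i)
    rw [hξ.wd_eq_abs hk (hJ i hi).1, wd_comm (ξ (J i))] at htri
    linarith [(hJ i hi).2]
  have hJstep : ∀ i < n, (J (i + 1) : ℝ) ≤ J i + (2 * N + C) := by
    intro i hi
    have := wd_triangle_real hgen (ξ (J i)) (f i) (ξ (J (i + 1)))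
    have := wd_triangle_real hgen (f i) (f (i + 1)) (ξ (J (i + 1)))
    have : (wd A (ξ (J i)) (f i) : ℝ) = wd A (f i) (ξ (J i)) := by rw [wd_comm]
    have := hξ.wd_eq_abs (hJ i hi.le).1 (hJ (i + 1) hi).1
    linarith [hstep i hi, (hJ i hi.le).2, (hJ (i + 1) hi).2,
      neg_abs_le ((J i : ℝ) - J (i + 1))]
  intro k hk
  rcases lt_or_ge (k : ℝ) (J 0) with h0 | h0
  · refine ⟨0, Nat.zero_le n, ?_⟩
    have e1 : (wd A (ξ k) (f 0) : ℝ) = k := by rw [wd_comm]; exact hξ.wd_start hk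
    have e2 : (wd A (f 0) (ξ (J 0)) : ℝ) = J 0 := hξ.wd_start (hJ 0 (Nat.zero_le n)).1
    linarith [(hJ 0 (Nat.zero_le n)).2]
  rcases lt_or_ge (J n : ℝ) k with hn | hn
  · refine ⟨n, le_rfl, ?_⟩
    have e1 : (wd A (ξ k) (f n) : ℝ) = m - k := hξ.wd_end hk
    have e2 : (wd A (f n) (ξ (J n)) : ℝ) = m - J n := by
      rw [wd_comm]
      exact hξ.wd_end (hJ n le_rfl).1
    linarith [(hJ n le_rfl).2]
  obtain ⟨i, hi, hik⟩ :=
    exists_le_le_add_of_succ_le (g := fun i => (J i : ℝ)) (by positivity) hJstep h0 hn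
  refine ⟨i, hi, (hdist i hi k hk).trans ?_⟩
  rw [abs_of_nonneg (by linarith)]
  linarith

end CoarsePaths

def MapsGeodesicsNear (A : Set H) (φ : H →* H) (N : ℝ) : Prop :=
  ∀ x y : H, ∀ n m : ℕ, ∀ α ξ : ℕ → H,
    IsDiscreteGeodesic A n α x y → IsDiscreteGeodesic A m ξ (φ x) (φ y) →
    ∀ i, i ≤ n → ∃ j, j ≤ m ∧ (wd A (φ (α i)) (ξ j) : ℝ) ≤ N

section Neighbourhoods

variable {A : Set H} {φ : H →* H}

theorem MapsGeodesicsNear.mono {N N' : ℝ} (h : MapsGeodesicsNear A φ N) (hNN' : N ≤ N') :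
    MapsGeodesicsNear A φ N' := fun x y n m α ξ hα hξ i hi =>
  (h x y n m α ξ hα hξ i hi).imp fun _ hj => ⟨hj.1, hj.2.trans hNN'⟩

theorem mapsGeodesicsNear_of_gp_le (hgen : Subgroup.closure A = ⊤) {δ q : ℝ} (hδ : 0 ≤ δ)
    (hR : RipsCondition A δ) (hq : ∀ u v : H, gp A 1 u v ≤ 0 → gp A 1 (φ u) (φ v) ≤ q) :
    MapsGeodesicsNear A φ (q + 2 * δ + 1) := by
  intro x y n m α ξ hα hξ i hi
  have hgp : gp A (φ (α i)) (φ x) (φ y) ≤ q := by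
    have := hq ((α i)⁻¹ * x) ((α i)⁻¹ * y) (by rw [gp_inv_mul, hα.gp_eq_zero hi])
    rwa [map_mul, map_mul, map_inv, gp_inv_mul] at this
  obtain ⟨j, hj, hjd⟩ := exists_wd_le_gp_add hgen hδ hR hξ (φ (α i))
  exact ⟨j, hj, by linarith⟩

theorem brp_of_mapsGeodesicsNear (hgen : Subgroup.closure A = ⊤) {δ N : ℝ} {C : ℕ} (hδ : 0 ≤ δ)
    (hR : RipsCondition A δ) (hC : ∀ g h : H, wd A (φ g) (φ h) ≤ C * wd A g h) (hN : 0 ≤ N)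
    (h : MapsGeodesicsNear A φ N) : BRP A φ := by
  intro p hp
  refine ⟨C * (p + 2 * δ + 1) + N, by positivity, fun u v huv => ?_⟩
  obtain ⟨α, hα⟩ := exists_isDiscreteGeodesic hgen u v
  obtain ⟨ξ, hξ⟩ := exists_isDiscreteGeodesic hgen (φ u) (φ v)
  obtain ⟨i, hi, hαi⟩ := exists_wd_le_gp_add hgen hδ hR hα 1
  obtain ⟨j, hj, hξj⟩ := h u v _ _ α ξ hα hξ i hi
  have hφαi : (wd A 1 (φ (α i)) : ℝ) ≤ C * wd A 1 (α i) := by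
    exact_mod_cast map_one φ ▸ hC 1 (α i)
  calc gp A 1 (φ u) (φ v) ≤ wd A 1 (ξ j) := gp_le_wd_of_wd_add_wd_eq hgen (hξ.wd_add_wd hj) 1
    _ ≤ wd A 1 (φ (α i)) + wd A (φ (α i)) (ξ j) := wd_triangle_real hgen _ _ _
    _ ≤ C * wd A 1 (α i) + N := add_le_add hφαi hξj
    _ ≤ C * (p + 2 * δ + 1) + N := by gcongr; linarith

theorem MapsGeodesicsNear.exists_wd_le (hgen : Subgroup.closure A = ⊤) {C : ℕ}
    (hC : ∀ g h : H, wd A (φ g) (φ h) ≤ C * wd A g h) {N : ℝ} (h : MapsGeodesicsNear A φ N)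
    {x y : H} {n m : ℕ} {α ξ : ℕ → H} (hα : IsDiscreteGeodesic A n α x y)
    (hξ : IsDiscreteGeodesic A m ξ (φ x) (φ y)) :
    ∀ k ≤ m, ∃ i ≤ n, (wd A (ξ k) (φ (α i)) : ℝ) ≤ 3 * N + C := by
  refine exists_wd_le_of_forall_exists_wd_le (f := fun i => φ (α i)) hgen (Nat.cast_nonneg C)
    (by simpa only [hα.1, hα.2.1] using hξ) (fun i hi => ?_) (h x y n m α ξ hα hξ)
  have := hC (α i) (α (i + 1))
  rw [hα.wd_succ hi, mul_one] at this
  exact_mod_cast this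

end Neighbourhoods

/-- Equivalence of the BRP with the Hausdorff-distance and neighbourhood formulations:
the image under `φ` of a geodesic `[x,y]` is at uniformly bounded Hausdorff distance
from any geodesic `[φ(x),φ(y)]`, resp. lies in a uniform neighbourhood of it. -/
theorem brp_iff_hausdorff_iff_neighbourhood
    (A : Set H) (hA : A.Finite) (hgen : Subgroup.closure A = ⊤)
    (hhyp : IsHyperbolic A) (φ : H →* H) :
    (BRP A φ ↔
      (∃ N : ℝ, 0 ≤ N ∧ ∀ x y : H, ∀ n m : ℕ, ∀ α ξ : ℕ → H,
        IsDiscreteGeodesic A n α x y → IsDiscreteGeodesic A m ξ (φ x) (φ y) →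
        (∀ i, i ≤ n → ∃ j, j ≤ m ∧ (wd A (φ (α i)) (ξ j) : ℝ) ≤ N) ∧
        (∀ j, j ≤ m → ∃ i, i ≤ n ∧ (wd A (ξ j) (φ (α i)) : ℝ) ≤ N))) ∧
    (BRP A φ ↔
      (∃ N : ℝ, 0 ≤ N ∧ ∀ x y : H, ∀ n m : ℕ, ∀ α ξ : ℕ → H,
        IsDiscreteGeodesic A n α x y → IsDiscreteGeodesic A m ξ (φ x) (φ y) →
        ∀ i, i ≤ n → ∃ j, j ≤ m ∧ (wd A (φ (α i)) (ξ j) : ℝ) ≤ N)) := by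
  obtain ⟨δ, hδ, hR⟩ := hhyp
  obtain ⟨C, hC⟩ := exists_wd_map_le_mul hA hgen hgen φ
  have near_of_brp : BRP A φ → ∃ N : ℝ, 0 ≤ N ∧ MapsGeodesicsNear A φ N := fun hbrp => by
    obtain ⟨q, hq, hbrp₀⟩ := hbrp 0 le_rfl
    exact ⟨_, by positivity, mapsGeodesicsNear_of_gp_le hgen hδ hR hbrp₀⟩
  have brp_of_near : (∃ N : ℝ, 0 ≤ N ∧ MapsGeodesicsNear A φ N) → BRP A φ :=
    fun ⟨_, hN, h⟩ => brp_of_mapsGeodesicsNear hgen hδ hR hC hN h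
  refine ⟨⟨fun hbrp => ?_, fun ⟨N, hN, h⟩ => brp_of_near ⟨N, hN, fun x y n m α ξ hα hξ =>
    (h x y n m α ξ hα hξ).1⟩⟩, near_of_brp, brp_of_near⟩
  obtain ⟨N, hN, h⟩ := near_of_brp hbrp
  refine ⟨3 * N + C, by positivity, fun x y n m α ξ hα hξ =>
    ⟨h.mono (by linarith [(Nat.cast_nonneg C : (0 : ℝ) ≤ C)]) x y n m α ξ hα hξ,
      h.exists_wd_le hgen hC hα hξ⟩⟩

end Paper
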